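/- arXiv:2411.05837 — 3 statements merged into one kernel-verified Lean document; each statement's English description precedes it below -/
import Mathlib

section
/- For a k-layer neural network f_W(x) = W_k φ(...φ(W_1 x)) with 1-Lipschitz activation φ, φ(0)=0, and weight matrices satisfying ‖W_i‖ ≤ B_i and input ‖x‖ ≤ C, the map W ↦ f_W(x) is Lipschitz in the full parameter vector W with Lipschitz constant at most Δ_{k,1}·C, where Δ_{k,1} = Σ_{i=1}^k ∏_{j≠i, j≤k} B_j. -/
open Finset

/-- The `ℓ₂` (spectral) operator norm of a matrix. -/
noncomputable def sNorm {n m : ℕ} (M : Matrix (Fin n) (Fin m) ℝ) : ℝ :=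
  ‖LinearMap.toContinuousLinearMap (Matrix.toEuclideanLin M)‖

/-- A `k`-layer neural network `f_W(x) = W_k φ(W_{k-1} φ(⋯ φ(W_1 x)))` with layer
dimensions `d 0, d 1, …, d k` and weight matrices `W i : ℝ^{d(i+1) × d(i)}`
(so `W 0, …, W (k-1)` are the weights `W_1, …, W_k` of the paper). -/
noncomputable def net (φ : ℝ → ℝ) (d : ℕ → ℕ)
    (W : (i : ℕ) → Matrix (Fin (d (i+1))) (Fin (d i)) ℝ) :
    (k : ℕ) → EuclideanSpace ℝ (Fin (d 0)) → EuclideanSpace ℝ (Fin (d k))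
  | 0 => fun x => x
  | 1 => fun x => Matrix.toEuclideanLin (W 0) x
  | (k+2) => fun x =>
      Matrix.toEuclideanLin (W (k+1)) ((WithLp.equiv 2 _).symm fun j => φ (net φ d W (k+1) x j))

/-- The concatenated parameter vector of the first `k` weight matrices, with the
Euclidean (ℓ₂) norm on the concatenation of all entries. -/
abbrev Params (d : ℕ → ℕ) (k : ℕ) : Type :=
  PiLp 2 (fun i : Fin k => EuclideanSpace ℝ (Fin (d (i.1 + 1)) × Fin (d i.1)))

/-- The weight matrices encoded by a parameter vector (`0` beyond layer `k`). -/
noncomputable def pW (d : ℕ → ℕ) (k : ℕ) (p : Params d k) :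
    (i : ℕ) → Matrix (Fin (d (i+1))) (Fin (d i)) ℝ :=
  fun i => if h : i < k then Matrix.of (fun a b => p ⟨i, h⟩ (a, b)) else 0

/-- The `k`-layer network as a function of its concatenated parameter vector. -/
noncomputable def netP (φ : ℝ → ℝ) (d : ℕ → ℕ) (k : ℕ) (p : Params d k) :
    EuclideanSpace ℝ (Fin (d 0)) → EuclideanSpace ℝ (Fin (d k)) :=
  net φ d (pW d k p) k

/-!
Peeling off the last layer, `W a - V b = W (a - b) + (W - V) b`. With `‖W‖ ≤ B_k`,
`‖W - V‖ ≤ ε`, the activation `1`-Lipschitz and `‖b‖ ≤ (∏_{j<k} B_j) ‖x‖`, induction on the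
depth gives `‖f_W(x) - f_V(x)‖ ≤ Δ_k ‖x‖ ε`, because `Δ_{k+1} = B_k Δ_k + ∏_{j<k} B_j`.
Every block of `p - q` has Frobenius norm at most `‖p - q‖`, and the Frobenius norm dominates
the spectral one, so `ε = ‖p - q‖` works.
-/

theorem sNorm_nonneg {n m : ℕ} (M : Matrix (Fin n) (Fin m) ℝ) : 0 ≤ sNorm M :=
  norm_nonneg _

theorem norm_toEuclideanLin_le {n m : ℕ} (M : Matrix (Fin n) (Fin m) ℝ)
    (v : EuclideanSpace ℝ (Fin m)) : ‖Matrix.toEuclideanLin M v‖ ≤ sNorm M * ‖v‖ :=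
  (LinearMap.toContinuousLinearMap (Matrix.toEuclideanLin M)).le_opNorm v

theorem norm_toEuclideanLin_sub_le {n m : ℕ} (M N : Matrix (Fin n) (Fin m) ℝ)
    (u v : EuclideanSpace ℝ (Fin m)) :
    ‖Matrix.toEuclideanLin M u - Matrix.toEuclideanLin N v‖
      ≤ sNorm M * ‖u - v‖ + sNorm (M - N) * ‖v‖ := by
  have h_split : Matrix.toEuclideanLin M u - Matrix.toEuclideanLin N v
      = Matrix.toEuclideanLin M (u - v) + Matrix.toEuclideanLin (M - N) v := by
    rw [map_sub, map_sub, LinearMap.sub_apply]; abel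
  rw [h_split]
  exact (norm_add_le _ _).trans
    (add_le_add (norm_toEuclideanLin_le _ _) (norm_toEuclideanLin_le _ _))

theorem sNorm_le_frobenius {n m : ℕ} (v : EuclideanSpace ℝ (Fin n × Fin m)) :
    sNorm (Matrix.of fun a b => v (a, b)) ≤ ‖v‖ := by
  refine ContinuousLinearMap.opNorm_le_bound _ (norm_nonneg v) fun x => ?_
  rw [LinearMap.coe_toContinuousLinearMap', EuclideanSpace.norm_eq, EuclideanSpace.norm_eq,
    EuclideanSpace.norm_eq, ← Real.sqrt_mul (by positivity), Fintype.sum_prod_type, sum_mul]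
  gcongr with a
  simpa [Matrix.mulVec, dotProduct] using sum_mul_sq_le_sq_mul_sq univ (fun b => v (a, b)) x

theorem pW_sub (d : ℕ → ℕ) (k : ℕ) (p q : Params d k) (i : ℕ) :
    pW d k p i - pW d k q i = pW d k (p - q) i := by
  unfold pW
  split_ifs
  · ext; simp
  · simp

theorem sNorm_pW_le (d : ℕ → ℕ) (k : ℕ) (p : Params d k) (i : ℕ) :
    sNorm (pW d k p i) ≤ ‖p‖ := by
  unfold pW
  split_ifs with hi
  · exact (sNorm_le_frobenius _).trans (PiLp.norm_apply_le p ⟨i, hi⟩)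
  · simp [sNorm]

theorem sum_prod_erase_range_succ {R : Type*} [CommSemiring R] (f : ℕ → R) (k : ℕ) :
    ∑ i ∈ range (k + 1), ∏ j ∈ (range (k + 1)).erase i, f j
      = f k * ∑ i ∈ range k, ∏ j ∈ (range k).erase i, f j + ∏ j ∈ range k, f j := by
  have h_erase : ∀ i ∈ range k, ∏ j ∈ (range (k + 1)).erase i, f j
      = f k * ∏ j ∈ (range k).erase i, f j := by
    intro i hi
    rw [range_add_one, erase_insert_of_ne (ne_of_lt (mem_range.mp hi)).symm,
      prod_insert (fun h => notMem_range_self (mem_of_mem_erase h))]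
  rw [sum_range_succ, sum_congr rfl h_erase, ← mul_sum, range_add_one,
    erase_insert notMem_range_self]

noncomputable def coordMap (φ : ℝ → ℝ) {ι : Type*} (y : EuclideanSpace ℝ ι) :
    EuclideanSpace ℝ ι :=
  (WithLp.equiv 2 (ι → ℝ)).symm fun j => φ (y j)

theorem LipschitzWith.coordMap {φ : ℝ → ℝ} {K : NNReal} (hφ : LipschitzWith K φ)
    {ι : Type*} [Fintype ι] : LipschitzWith K (coordMap φ : EuclideanSpace ℝ ι → _) := by
  refine LipschitzWith.of_dist_le_mul fun y z => ?_
  rw [EuclideanSpace.dist_eq, EuclideanSpace.dist_eq, ← Real.sqrt_sq K.coe_nonneg,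
    ← Real.sqrt_mul (sq_nonneg _), mul_sum]
  gcongr with j
  rw [← mul_pow]
  exact pow_le_pow_left₀ dist_nonneg (hφ.dist_le_mul _ _) 2

theorem coordMap_zero {φ : ℝ → ℝ} (hφ0 : φ 0 = 0) {ι : Type*} :
    coordMap φ (0 : EuclideanSpace ℝ ι) = 0 := by
  ext j; simp [coordMap, hφ0]

/-- What `net` applies to the output of layer `k` before multiplying by `W k`; no activation
precedes the first layer. -/
noncomputable def preAct (φ : ℝ → ℝ) {n : ℕ} :
    ℕ → EuclideanSpace ℝ (Fin n) → EuclideanSpace ℝ (Fin n)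
  | 0 => id
  | _ + 1 => coordMap φ

theorem net_succ (φ : ℝ → ℝ) (d : ℕ → ℕ)
    (W : (i : ℕ) → Matrix (Fin (d (i+1))) (Fin (d i)) ℝ) (k : ℕ)
    (x : EuclideanSpace ℝ (Fin (d 0))) :
    net φ d W (k + 1) x = Matrix.toEuclideanLin (W k) (preAct φ k (net φ d W k x)) := by
  cases k <;> rfl

theorem lipschitzWith_preAct {φ : ℝ → ℝ} (hφ : LipschitzWith 1 φ) {n : ℕ} (k : ℕ) :
    LipschitzWith 1 (preAct φ k : EuclideanSpace ℝ (Fin n) → _) := by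
  cases k
  · exact LipschitzWith.id
  · exact hφ.coordMap

theorem norm_preAct_le {φ : ℝ → ℝ} (hφ : LipschitzWith 1 φ) (hφ0 : φ 0 = 0) {n : ℕ}
    (k : ℕ) (y : EuclideanSpace ℝ (Fin n)) : ‖preAct φ k y‖ ≤ ‖y‖ := by
  have h0 : preAct φ k (0 : EuclideanSpace ℝ (Fin n)) = 0 := by
    cases k
    · rfl
    · exact coordMap_zero hφ0
  simpa [h0] using (lipschitzWith_preAct hφ k).dist_le_mul y 0

theorem norm_preAct_sub_le {φ : ℝ → ℝ} (hφ : LipschitzWith 1 φ) {n : ℕ} (k : ℕ)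
    (y z : EuclideanSpace ℝ (Fin n)) : ‖preAct φ k y - preAct φ k z‖ ≤ ‖y - z‖ := by
  simpa [dist_eq_norm] using (lipschitzWith_preAct hφ k).dist_le_mul y z

section

variable {φ : ℝ → ℝ} {d : ℕ → ℕ} {B : ℕ → ℝ}
  {W V : (i : ℕ) → Matrix (Fin (d (i+1))) (Fin (d i)) ℝ}

theorem norm_net_le (hφ : LipschitzWith 1 φ) (hφ0 : φ 0 = 0)
    (x : EuclideanSpace ℝ (Fin (d 0))) {k : ℕ} (hW : ∀ i < k, sNorm (W i) ≤ B i) :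
    ‖net φ d W k x‖ ≤ (∏ j ∈ range k, B j) * ‖x‖ := by
  induction k with
  | zero => simp [net]
  | succ k ih =>
    calc ‖net φ d W (k + 1) x‖ ≤ sNorm (W k) * ‖preAct φ k (net φ d W k x)‖ := by
          rw [net_succ]; exact norm_toEuclideanLin_le _ _
      _ ≤ B k * ((∏ j ∈ range k, B j) * ‖x‖) := by
          gcongr
          · exact (sNorm_nonneg _).trans (hW k k.lt_succ_self)
          · exact hW k k.lt_succ_self
          · exact (norm_preAct_le hφ hφ0 k _).trans
              (ih fun i hi => hW i (hi.trans k.lt_succ_self))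
      _ = (∏ j ∈ range (k + 1), B j) * ‖x‖ := by rw [prod_range_succ]; ring

theorem norm_net_sub_net_le (hφ : LipschitzWith 1 φ) (hφ0 : φ 0 = 0)
    (x : EuclideanSpace ℝ (Fin (d 0))) {k : ℕ} {ε : ℝ}
    (hW : ∀ i < k, sNorm (W i) ≤ B i) (hV : ∀ i < k, sNorm (V i) ≤ B i)
    (hWV : ∀ i < k, sNorm (W i - V i) ≤ ε) :
    ‖net φ d W k x - net φ d V k x‖
      ≤ (∑ i ∈ range k, ∏ j ∈ (range k).erase i, B j) * ‖x‖ * ε := by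
  induction k with
  | zero => simp [net]
  | succ k ih =>
    have below {P : ℕ → Prop} (h : ∀ i < k + 1, P i) : ∀ i < k, P i :=
      fun i hi => h i (hi.trans k.lt_succ_self)
    have hWk := hW k k.lt_succ_self
    have hWVk := hWV k k.lt_succ_self
    set a := net φ d W k x
    set b := net φ d V k x
    calc ‖net φ d W (k + 1) x - net φ d V (k + 1) x‖
        ≤ sNorm (W k) * ‖preAct φ k a - preAct φ k b‖
            + sNorm (W k - V k) * ‖preAct φ k b‖ := by
          rw [net_succ, net_succ]; exact norm_toEuclideanLin_sub_le _ _ _ _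
      _ ≤ B k * ((∑ i ∈ range k, ∏ j ∈ (range k).erase i, B j) * ‖x‖ * ε)
            + ε * ((∏ j ∈ range k, B j) * ‖x‖) := by
          have hBk : 0 ≤ B k := (sNorm_nonneg _).trans hWk
          have hε : 0 ≤ ε := (sNorm_nonneg _).trans hWVk
          gcongr
          · exact (norm_preAct_sub_le hφ k a b).trans (ih (below hW) (below hV) (below hWV))
          · exact (norm_preAct_le hφ hφ0 k b).trans (norm_net_le hφ hφ0 x (below hV))
      _ = (∑ i ∈ range (k + 1), ∏ j ∈ (range (k + 1)).erase i, B j) * ‖x‖ * ε := by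
          rw [sum_prod_erase_range_succ]; ring

end

/-- For a `k`-layer network with `1`-Lipschitz activation `φ`, `φ 0 = 0`,
all weight matrices of spectral norm at most `B i`, and `‖x‖ ≤ C`, the map
`W ↦ f_W(x)` is Lipschitz in the concatenated parameter vector with constant
`Δ_{k,1} C`, where `Δ_{k,1} = ∑_{i=1}^k ∏_{j ≠ i} B_j`. -/
theorem net_param_lipschitz (φ : ℝ → ℝ) (hφ : LipschitzWith 1 φ) (hφ0 : φ 0 = 0)
    (d : ℕ → ℕ) (k : ℕ) (B : ℕ → ℝ) (C : ℝ)
    (x : EuclideanSpace ℝ (Fin (d 0))) (hx : ‖x‖ ≤ C)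
    (p q : Params d k)
    (hp : ∀ i : Fin k, sNorm (pW d k p i.1) ≤ B i.1)
    (hq : ∀ i : Fin k, sNorm (pW d k q i.1) ≤ B i.1) :
    ‖netP φ d k p x - netP φ d k q x‖
      ≤ ((∑ i ∈ range k, ∏ j ∈ (range k).erase i, B j) * C) * ‖p - q‖ := by
  have hB : ∀ j ∈ range k, 0 ≤ B j := fun j hj =>
    (sNorm_nonneg _).trans (hp ⟨j, mem_range.mp hj⟩)
  have hΔ : 0 ≤ ∑ i ∈ range k, ∏ j ∈ (range k).erase i, B j :=
    sum_nonneg fun i _ => prod_nonneg fun j hj => hB j (mem_of_mem_erase hj)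
  calc ‖netP φ d k p x - netP φ d k q x‖
      ≤ (∑ i ∈ range k, ∏ j ∈ (range k).erase i, B j) * ‖x‖ * ‖p - q‖ :=
        norm_net_sub_net_le hφ hφ0 x (fun i hi => hp ⟨i, hi⟩) (fun i hi => hq ⟨i, hi⟩)
          fun i _ => pW_sub d k p q i ▸ sNorm_pW_le d k (p - q) i
    _ ≤ ((∑ i ∈ range k, ∏ j ∈ (range k).erase i, B j) * C) * ‖p - q‖ := by gcongr
end

section
/- For a k-layer neural network with 1-Lipschitz, 1-smooth activation φ satisfying φ(0)=0, weight bounds ‖W_i‖ ≤ B_i with B_i ≥ 1, and input bound ‖x‖ ≤ C with C ≥ 1, the parameter gradient map W ↦ ∇_W f_W(x) is Lipschitz with constant at most 3k·Δ_{k,1}²·C², where Δ_{k,1} = Σ_{i=1}^k ∏_{j≠i, j≤k} B_j. -/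
open Finset

/-!
Let `a₀ = x`, `a_{m+1} = φ(W_m a_m)` be the hidden activations, as functions of the parameters.
On the set of parameters obeying the weight bounds, carry along the layers bounds for `‖a_m‖`,
for the Lipschitz constant of `a_m`, for `‖∇a_m‖` and for the Lipschitz constant of `∇a_m`.
Since `(W, a) ↦ W a` is bilinear of norm at most one (the spectral norm is dominated by the
Frobenius norm), the product rule updates the four bounds explicitly; applying `φ` keeps the
first three and, `φ'` being `1`-Lipschitz, adds the product of the second and third to the fourth.
With `Δ_{m+1} = ∏_{j<m} B_j + B_m Δ_m` the bounds are `∏_{j<m} B_j C`, `Δ_m C`, `Δ_m C` and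
`3 m Δ_m² C²`.
-/

-- The paper's `Δ_{m,1}`.
noncomputable def delta (B : ℕ → ℝ) (m : ℕ) : ℝ :=
  ∑ i ∈ range m, ∏ j ∈ (range m).erase i, B j

theorem delta_zero (B : ℕ → ℝ) : delta B 0 = 0 := rfl

theorem delta_succ (B : ℕ → ℝ) (m : ℕ) :
    delta B (m + 1) = ∏ j ∈ range m, B j + B m * delta B m := by
  have hm : m ∉ range m := notMem_range_self
  have herase : ∀ i ∈ range m, ∏ j ∈ (range (m + 1)).erase i, B j
      = B m * ∏ j ∈ (range m).erase i, B j := fun i hi => by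
    rw [range_add_one, erase_insert_of_ne (by rintro rfl; exact hm hi),
      prod_insert (fun h => hm (mem_of_mem_erase h))]
  rw [delta, sum_range_succ, sum_congr rfl herase, ← mul_sum, range_add_one, erase_insert hm,
    add_comm, delta]

theorem delta_nonneg {B : ℕ → ℝ} (hB : ∀ i, 0 ≤ B i) (m : ℕ) : 0 ≤ delta B m :=
  sum_nonneg fun _ _ => prod_nonneg fun j _ => hB j

theorem delta_step_le {B : ℕ → ℝ} (hB : ∀ i, 1 ≤ B i) {C : ℝ} (hC : 1 ≤ C) (m : ℕ) :
    B m * (3 * m * delta B m ^ 2 * C ^ 2) + delta B m * C + delta B m * C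
        + delta B (m + 1) * C * (delta B (m + 1) * C)
      ≤ 3 * ((m + 1 : ℕ) : ℝ) * delta B (m + 1) ^ 2 * C ^ 2 := by
  have hΔ : 0 ≤ delta B m := delta_nonneg (fun i => zero_le_one.trans (hB i)) m
  have hprod : 1 ≤ ∏ j ∈ range m, B j := one_le_prod fun j _ => hB j
  have hBΔ : B m * delta B m ≤ delta B (m + 1) := by rw [delta_succ]; linarith
  have hΔ' : delta B m ≤ delta B (m + 1) := by nlinarith [hB m]
  have hsq : B m * delta B m ^ 2 ≤ delta B (m + 1) ^ 2 := by nlinarith [hB m]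
  have hlin : delta B m * C ≤ delta B (m + 1) ^ 2 * C ^ 2 := by
    have h1 : 1 ≤ delta B (m + 1) := by rw [delta_succ]; nlinarith [hB m]
    have hC2 : C ≤ C ^ 2 := by nlinarith
    calc delta B m * C ≤ delta B (m + 1) ^ 2 * C := by gcongr; nlinarith
      _ ≤ delta B (m + 1) ^ 2 * C ^ 2 := by gcongr
  have hm : (0 : ℝ) ≤ 3 * m * C ^ 2 := by positivity
  push_cast
  nlinarith [mul_le_mul_of_nonneg_right hsq hm]

section SmoothBounds

variable {P E F : Type*} [NormedAddCommGroup P] [NormedSpace ℝ P] [NormedAddCommGroup E]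
  [NormedSpace ℝ E] [NormedAddCommGroup F] [NormedSpace ℝ F]

theorem ContinuousLinearMap.fderiv_of_bilinear_id_left (Λ : P →L[ℝ] E →L[ℝ] F) {g : P → E}
    {p : P} (hg : DifferentiableAt ℝ g p) :
    fderiv ℝ (fun r => Λ r (g r)) p = (Λ p).comp (fderiv ℝ g p) + Λ.flip (g p) := by
  rw [Λ.fderiv_of_bilinear (f := fun r => r) differentiableAt_id hg, fderiv_fun_id]
  rfl

theorem ContinuousLinearMap.norm_flip_apply_le (Λ : P →L[ℝ] E →L[ℝ] F) (hΛ : ‖Λ‖ ≤ 1) (v : E) :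
    ‖Λ.flip v‖ ≤ ‖v‖ := by
  simpa using Λ.flip.le_of_opNorm_le (Λ.opNorm_flip.le.trans hΛ) v

theorem ContinuousLinearMap.norm_apply_le_of_norm_le_one (f : P →L[ℝ] E) (hf : ‖f‖ ≤ 1)
    (p : P) : ‖f p‖ ≤ ‖p‖ := by
  simpa using f.le_of_opNorm_le hf p

theorem ContinuousLinearMap.norm_apply_sub_apply_le (Λ : P →L[ℝ] E →L[ℝ] F) (hΛ : ‖Λ‖ ≤ 1)
    (p q : P) (u v : E) : ‖Λ p u - Λ q v‖ ≤ ‖Λ p‖ * ‖u - v‖ + ‖p - q‖ * ‖v‖ := by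
  have hsplit : Λ p u - Λ q v = Λ p (u - v) + Λ (p - q) v := by
    simp only [map_sub, sub_apply]
    abel
  rw [hsplit]
  exact (norm_add_le _ _).trans (add_le_add ((Λ p).le_opNorm _)
    (((Λ (p - q)).le_opNorm _).trans (by gcongr; exact Λ.norm_apply_le_of_norm_le_one hΛ _)))

theorem ContinuousLinearMap.norm_fderiv_bilinear_id_left_sub_le (Λ : P →L[ℝ] E →L[ℝ] F)
    (hΛ : ‖Λ‖ ≤ 1) {g : P → E} (hg : Differentiable ℝ g) (p q : P) :
    ‖fderiv ℝ (fun r => Λ r (g r)) p - fderiv ℝ (fun r => Λ r (g r)) q‖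
      ≤ ‖Λ p‖ * ‖fderiv ℝ g p - fderiv ℝ g q‖ + ‖p - q‖ * ‖fderiv ℝ g q‖ + ‖g p - g q‖ := by
  have hsplit : (Λ p).comp (fderiv ℝ g p) + Λ.flip (g p)
      - ((Λ q).comp (fderiv ℝ g q) + Λ.flip (g q))
      = (Λ p).comp (fderiv ℝ g p - fderiv ℝ g q) + (Λ (p - q)).comp (fderiv ℝ g q)
        + Λ.flip (g p - g q) := by
    simp only [map_sub, ContinuousLinearMap.comp_sub, ContinuousLinearMap.sub_comp]
    abel
  rw [Λ.fderiv_of_bilinear_id_left (hg p), Λ.fderiv_of_bilinear_id_left (hg q), hsplit]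
  exact (norm_add_le _ _).trans (add_le_add ((norm_add_le _ _).trans
    (add_le_add ((Λ p).opNorm_comp_le _) (((Λ (p - q)).opNorm_comp_le _).trans
      (by gcongr; exact Λ.norm_apply_le_of_norm_le_one hΛ _)))) (Λ.norm_flip_apply_le hΛ _))

structure SmoothBoundsOn (g : P → E) (S : Set P) (A L D M : ℝ) : Prop where
  differentiable : Differentiable ℝ g
  norm_le : ∀ p ∈ S, ‖g p‖ ≤ A
  norm_sub_le : ∀ p ∈ S, ∀ q ∈ S, ‖g p - g q‖ ≤ L * ‖p - q‖
  norm_fderiv_le : ∀ p ∈ S, ‖fderiv ℝ g p‖ ≤ D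
  norm_fderiv_sub_le : ∀ p ∈ S, ∀ q ∈ S, ‖fderiv ℝ g p - fderiv ℝ g q‖ ≤ M * ‖p - q‖

namespace SmoothBoundsOn

variable {g : P → E} {S : Set P} {A L D M : ℝ}

theorem mono {A' L' D' M' : ℝ} (h : SmoothBoundsOn g S A L D M) (hA : A ≤ A') (hL : L ≤ L')
    (hD : D ≤ D') (hM : M ≤ M') : SmoothBoundsOn g S A' L' D' M' where
  differentiable := h.differentiable
  norm_le p hp := (h.norm_le p hp).trans hA
  norm_sub_le p hp q hq := (h.norm_sub_le p hp q hq).trans (by gcongr)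
  norm_fderiv_le p hp := (h.norm_fderiv_le p hp).trans hD
  norm_fderiv_sub_le p hp q hq := (h.norm_fderiv_sub_le p hp q hq).trans (by gcongr)

theorem const (x : E) (hx : ‖x‖ ≤ A) : SmoothBoundsOn (fun _ : P => x) S A 0 0 0 where
  differentiable := differentiable_const x
  norm_le _ _ := hx
  norm_sub_le _ _ _ _ := by simp
  norm_fderiv_le _ _ := by simp
  norm_fderiv_sub_le _ _ _ _ := by simp

theorem bilinear_id_left (h : SmoothBoundsOn g S A L D M) (Λ : P →L[ℝ] E →L[ℝ] F)
    (hΛ : ‖Λ‖ ≤ 1) {b : ℝ} (hb : ∀ p ∈ S, ‖Λ p‖ ≤ b) :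
    SmoothBoundsOn (fun p => Λ p (g p)) S (b * A) (b * L + A) (b * D + A) (b * M + D + L) := by
  have hb0 : ∀ p ∈ S, 0 ≤ b := fun p hp => (norm_nonneg _).trans (hb p hp)
  refine ⟨fun p => (Λ.hasFDerivAt_of_bilinear (hasFDerivAt_id p)
    (h.differentiable p).hasFDerivAt).differentiableAt, fun p hp => ?_, fun p hp q hq => ?_,
    fun p hp => ?_, fun p hp q hq => ?_⟩
  · exact ((Λ p).le_opNorm _).trans
      (mul_le_mul (hb p hp) (h.norm_le p hp) (norm_nonneg _) (hb0 p hp))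
  · calc _ ≤ ‖Λ p‖ * ‖g p - g q‖ + ‖p - q‖ * ‖g q‖ := Λ.norm_apply_sub_apply_le hΛ p q _ _
      _ ≤ b * (L * ‖p - q‖) + ‖p - q‖ * A :=
          add_le_add (mul_le_mul (hb p hp) (h.norm_sub_le p hp q hq) (norm_nonneg _) (hb0 p hp))
            (mul_le_mul_of_nonneg_left (h.norm_le q hq) (norm_nonneg _))
      _ = (b * L + A) * ‖p - q‖ := by ring
  · rw [Λ.fderiv_of_bilinear_id_left (h.differentiable p)]
    exact (norm_add_le _ _).trans (add_le_add (((Λ p).opNorm_comp_le _).trans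
      (mul_le_mul (hb p hp) (h.norm_fderiv_le p hp) (norm_nonneg _) (hb0 p hp)))
      ((Λ.norm_flip_apply_le hΛ _).trans (h.norm_le p hp)))
  · calc _ ≤ ‖Λ p‖ * ‖fderiv ℝ g p - fderiv ℝ g q‖ + ‖p - q‖ * ‖fderiv ℝ g q‖
          + ‖g p - g q‖ := Λ.norm_fderiv_bilinear_id_left_sub_le hΛ h.differentiable p q
      _ ≤ b * (M * ‖p - q‖) + ‖p - q‖ * D + L * ‖p - q‖ :=
          add_le_add (add_le_add
            (mul_le_mul (hb p hp) (h.norm_fderiv_sub_le p hp q hq) (norm_nonneg _) (hb0 p hp))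
            (mul_le_mul_of_nonneg_left (h.norm_fderiv_le q hq) (norm_nonneg _)))
            (h.norm_sub_le p hp q hq)
      _ = (b * M + D + L) * ‖p - q‖ := by ring

theorem bilinear_id_left_delta {B : ℕ → ℝ} {C : ℝ} {m : ℕ}
    (h : SmoothBoundsOn g S ((∏ j ∈ range m, B j) * C) (delta B m * C) (delta B m * C) M)
    (Λ : P →L[ℝ] E →L[ℝ] F) (hΛ : ‖Λ‖ ≤ 1) (hb : ∀ p ∈ S, ‖Λ p‖ ≤ B m) :
    SmoothBoundsOn (fun p => Λ p (g p)) S ((∏ j ∈ range (m + 1), B j) * C)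
      (delta B (m + 1) * C) (delta B (m + 1) * C) (B m * M + delta B m * C + delta B m * C) := by
  have hA : B m * ((∏ j ∈ range m, B j) * C) = (∏ j ∈ range (m + 1), B j) * C := by
    rw [prod_range_succ]; ring
  have hL : B m * (delta B m * C) + (∏ j ∈ range m, B j) * C = delta B (m + 1) * C := by
    rw [delta_succ]; ring
  exact (h.bilinear_id_left Λ hΛ hb).mono hA.le hL.le hL.le le_rfl

theorem lipschitz_comp (h : SmoothBoundsOn g S A L D M) {Φ : E → E} (hΦ : Differentiable ℝ Φ)
    (hΦlip : LipschitzWith 1 Φ) (hΦ' : LipschitzWith 1 (fderiv ℝ Φ)) (hΦ0 : Φ 0 = 0) :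
    SmoothBoundsOn (Φ ∘ g) S A L D (M + L * D) := by
  have hΦ'le : ∀ u, ‖fderiv ℝ Φ u‖ ≤ 1 := fun u => by
    simpa using norm_fderiv_le_of_lipschitz ℝ hΦlip (x₀ := u)
  have hΦsub : ∀ u v, ‖Φ u - Φ v‖ ≤ ‖u - v‖ := fun u v => by
    simpa using hΦlip.norm_sub_le u v
  have hΦ'sub : ∀ u v, ‖fderiv ℝ Φ u - fderiv ℝ Φ v‖ ≤ ‖u - v‖ := fun u v => by
    simpa using hΦ'.norm_sub_le u v
  have hderiv p : fderiv ℝ (Φ ∘ g) p = (fderiv ℝ Φ (g p)).comp (fderiv ℝ g p) :=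
    fderiv_comp p (hΦ _) (h.differentiable p)
  refine ⟨hΦ.comp h.differentiable, fun p hp => ?_, fun p hp q hq => ?_, fun p hp => ?_,
    fun p hp q hq => ?_⟩
  · simpa [hΦ0] using hΦsub (g p) 0 |>.trans (by simpa using h.norm_le p hp)
  · exact (hΦsub _ _).trans (h.norm_sub_le p hp q hq)
  · rw [hderiv]
    exact ((fderiv ℝ Φ (g p)).opNorm_comp_le _).trans
      (by simpa using mul_le_mul (hΦ'le _) (h.norm_fderiv_le p hp) (norm_nonneg _) zero_le_one)
  · have hsplit : (fderiv ℝ Φ (g p)).comp (fderiv ℝ g p) - (fderiv ℝ Φ (g q)).comp (fderiv ℝ g q)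
        = (fderiv ℝ Φ (g p)).comp (fderiv ℝ g p - fderiv ℝ g q)
          + (fderiv ℝ Φ (g p) - fderiv ℝ Φ (g q)).comp (fderiv ℝ g q) := by
      simp only [ContinuousLinearMap.comp_sub, ContinuousLinearMap.sub_comp]
      abel
    rw [hderiv, hderiv, hsplit]
    calc _ ≤ ‖fderiv ℝ Φ (g p)‖ * ‖fderiv ℝ g p - fderiv ℝ g q‖
          + ‖fderiv ℝ Φ (g p) - fderiv ℝ Φ (g q)‖ * ‖fderiv ℝ g q‖ :=
          (norm_add_le _ _).trans (add_le_add (ContinuousLinearMap.opNorm_comp_le _ _)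
            (ContinuousLinearMap.opNorm_comp_le _ _))
      _ ≤ 1 * (M * ‖p - q‖) + L * ‖p - q‖ * D :=
          add_le_add
            (mul_le_mul (hΦ'le _) (h.norm_fderiv_sub_le p hp q hq) (norm_nonneg _) zero_le_one)
            (mul_le_mul ((hΦ'sub _ _).trans (h.norm_sub_le p hp q hq)) (h.norm_fderiv_le q hq)
              (norm_nonneg _) ((norm_nonneg _).trans (h.norm_sub_le p hp q hq)))
      _ = (M + L * D) * ‖p - q‖ := by ring

end SmoothBoundsOn

end SmoothBounds

section Activation

variable {ι : Type*} [Fintype ι]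

noncomputable def activation (φ : ℝ → ℝ) (v : EuclideanSpace ℝ ι) : EuclideanSpace ℝ ι :=
  WithLp.toLp 2 fun j => φ (v j)

variable [DecidableEq ι]

theorem hasFDerivAt_activation {φ : ℝ → ℝ} (hφ : Differentiable ℝ φ) (v : EuclideanSpace ℝ ι) :
    HasFDerivAt (activation φ)
      (Matrix.toEuclideanCLM (𝕜 := ℝ) (Matrix.diagonal fun j => deriv φ (v j))) v := by
  rw [← hasFDerivWithinAt_univ, hasFDerivWithinAt_piLp]
  intro j
  refine (((hφ (v j)).hasDerivAt.comp_hasFDerivAt v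
    (PiLp.hasFDerivAt_apply (𝕜 := ℝ) 2 v j)).congr_fderiv ?_).hasFDerivWithinAt
  ext u
  simp [Matrix.mulVec_diagonal]

open scoped Matrix.Norms.L2Operator in
theorem lipschitzWith_activation {φ : ℝ → ℝ} (hφ : Differentiable ℝ φ)
    (hφlip : LipschitzWith 1 φ) : LipschitzWith 1 (activation φ : EuclideanSpace ℝ ι → _) := by
  refine lipschitzWith_of_nnnorm_fderiv_le
    (fun v => (hasFDerivAt_activation hφ v).differentiableAt) fun v => ?_
  rw [(hasFDerivAt_activation hφ v).fderiv, ← NNReal.coe_le_coe, coe_nnnorm,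
    Matrix.l2_opNorm_toEuclideanCLM, Matrix.l2_opNorm_diagonal]
  exact pi_norm_le_iff_of_nonneg zero_le_one |>.2 fun j => by
    simpa using norm_deriv_le_of_lipschitz hφlip (x₀ := v j)

open scoped Matrix.Norms.L2Operator in
theorem lipschitzWith_fderiv_activation {φ : ℝ → ℝ} (hφ : Differentiable ℝ φ)
    (hφ' : LipschitzWith 1 (deriv φ)) :
    LipschitzWith 1 (fderiv ℝ (activation φ : EuclideanSpace ℝ ι → _)) := by
  refine LipschitzWith.of_dist_le_mul fun v w => ?_
  rw [(hasFDerivAt_activation hφ v).fderiv, (hasFDerivAt_activation hφ w).fderiv, dist_eq_norm,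
    ← map_sub, Matrix.diagonal_sub, Matrix.l2_opNorm_toEuclideanCLM, Matrix.l2_opNorm_diagonal,
    NNReal.coe_one, one_mul, dist_eq_norm]
  refine pi_norm_le_iff_of_nonneg (norm_nonneg _) |>.2 fun j => ?_
  calc ‖deriv φ (v j) - deriv φ (w j)‖ ≤ ‖v j - w j‖ := by
        simpa using hφ'.norm_sub_le (v j) (w j)
    _ ≤ ‖v - w‖ := PiLp.norm_apply_le (v - w) j

end Activation

theorem norm_toEuclideanLin_reshape_le {ι κ : Type*} [Fintype ι] [Fintype κ] [DecidableEq κ]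
    (w : EuclideanSpace ℝ (ι × κ)) (v : EuclideanSpace ℝ κ) :
    ‖Matrix.toEuclideanLin (Matrix.of fun a b => w (a, b)) v‖ ≤ ‖w‖ * ‖v‖ := by
  refine le_of_sq_le_sq ?_ (by positivity)
  rw [mul_pow, EuclideanSpace.norm_sq_eq, EuclideanSpace.norm_sq_eq, EuclideanSpace.norm_sq_eq,
    Fintype.sum_prod_type, sum_mul]
  refine sum_le_sum fun a _ => ?_
  simpa [Matrix.mulVec, dotProduct] using
    sum_mul_sq_le_sq_mul_sq univ (fun b => w (a, b)) (fun b => v b)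

theorem pW_add (d : ℕ → ℕ) (k : ℕ) (p q : Params d k) (m : ℕ) :
    pW d k (p + q) m = pW d k p m + pW d k q m := by
  unfold pW; split <;> ext <;> simp

theorem pW_smul (d : ℕ → ℕ) (k : ℕ) (c : ℝ) (p : Params d k) (m : ℕ) :
    pW d k (c • p) m = c • pW d k p m := by
  unfold pW; split <;> ext <;> simp

theorem norm_toEuclideanLin_pW_le (d : ℕ → ℕ) (k m : ℕ) (p : Params d k)
    (v : EuclideanSpace ℝ (Fin (d m))) : ‖Matrix.toEuclideanLin (pW d k p m) v‖ ≤ ‖p‖ * ‖v‖ := by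
  unfold pW
  split
  · exact (norm_toEuclideanLin_reshape_le _ v).trans (by gcongr; exact PiLp.norm_apply_le p _)
  · simp only [map_zero, LinearMap.zero_apply, norm_zero]; positivity

noncomputable def layer (d : ℕ → ℕ) (k m : ℕ) :
    Params d k →L[ℝ] EuclideanSpace ℝ (Fin (d m)) →L[ℝ] EuclideanSpace ℝ (Fin (d (m + 1))) :=
  LinearMap.mkContinuous₂
    (LinearMap.mk₂ ℝ (fun p v => Matrix.toEuclideanLin (pW d k p m) v)
      (fun p q v => by rw [pW_add, map_add, LinearMap.add_apply])
      (fun c p v => by rw [pW_smul, map_smul, LinearMap.smul_apply])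
      (fun _ _ _ => map_add _ _ _) (fun _ _ _ => map_smul _ _ _))
    1 fun p v => by simpa using norm_toEuclideanLin_pW_le d k m p v

theorem norm_layer_le (d : ℕ → ℕ) (k m : ℕ) : ‖layer d k m‖ ≤ 1 :=
  LinearMap.mkContinuous₂_norm_le _ zero_le_one _

theorem norm_layer_apply_le_of_sNorm_le {d : ℕ → ℕ} {k : ℕ} {B : ℕ → ℝ} (hB : ∀ i, 0 ≤ B i)
    {p : Params d k} (hp : ∀ i : Fin k, sNorm (pW d k p i.1) ≤ B i.1) (i : ℕ) : ‖layer d k i p‖ ≤ B i := by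
  by_cases hi : i < k
  · exact hp ⟨i, hi⟩
  · have hzero : layer d k i p = 0 := by
      ext v : 1
      simp [layer, pW, hi]
    simpa [hzero] using hB i
noncomputable def netHidden (φ : ℝ → ℝ) (d : ℕ → ℕ) (k : ℕ) (x : EuclideanSpace ℝ (Fin (d 0))) :
    (m : ℕ) → Params d k → EuclideanSpace ℝ (Fin (d m))
  | 0 => fun _ => x
  | m + 1 => fun p => activation φ (layer d k m p (netHidden φ d k x m p))

theorem net_succ_eq (φ : ℝ → ℝ) (d : ℕ → ℕ) (k : ℕ) (x : EuclideanSpace ℝ (Fin (d 0)))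
    (p : Params d k) (m : ℕ) :
    net φ d (pW d k p) (m + 1) x = layer d k m p (netHidden φ d k x m p) := by
  induction m with
  | zero => rfl
  | succ m ih =>
    change Matrix.toEuclideanLin _ (activation φ (net φ d (pW d k p) (m + 1) x)) = _
    rw [ih]
    rfl

section Network

variable {φ : ℝ → ℝ} (hφ : Differentiable ℝ φ) (hφlip : LipschitzWith 1 φ)
  (hφ' : LipschitzWith 1 (deriv φ)) (hφ0 : φ 0 = 0) {d : ℕ → ℕ} {k : ℕ} {B : ℕ → ℝ}
  (hB : ∀ i, 1 ≤ B i) {C : ℝ} (hC : 1 ≤ C) {x : EuclideanSpace ℝ (Fin (d 0))} (hx : ‖x‖ ≤ C)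
include hφ hφlip hφ' hφ0 hB hC hx

theorem netHidden_smoothBoundsOn (m : ℕ) :
    SmoothBoundsOn (netHidden φ d k x m) {p | ∀ i, ‖layer d k i p‖ ≤ B i}
      ((∏ j ∈ range m, B j) * C) (delta B m * C) (delta B m * C)
      (3 * m * delta B m ^ 2 * C ^ 2) := by
  induction m with
  | zero =>
    show SmoothBoundsOn (fun _ => x) _ _ _ _ _
    simpa [delta_zero] using SmoothBoundsOn.const x (by simpa using hx)
  | succ m ih =>
    have hact : activation φ (0 : EuclideanSpace ℝ (Fin (d (m + 1)))) = 0 := by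
      ext j; exact hφ0
    exact ((ih.bilinear_id_left_delta (layer d k m) (norm_layer_le d k m) fun p hp => hp m)
      |>.lipschitz_comp (fun v => (hasFDerivAt_activation hφ v).differentiableAt)
        (lipschitzWith_activation hφ hφlip) (lipschitzWith_fderiv_activation hφ hφ') hact).mono
      le_rfl le_rfl le_rfl (delta_step_le hB hC m)

theorem netP_smoothBoundsOn :
    SmoothBoundsOn (fun p => netP φ d k p x) {p | ∀ i, ‖layer d k i p‖ ≤ B i}
      ((∏ j ∈ range k, B j) * C) (delta B k * C) (delta B k * C)
      (3 * k * delta B k ^ 2 * C ^ 2) := by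
  cases k with
  | zero =>
    show SmoothBoundsOn (fun _ => x) _ _ _ _ _
    simpa [delta_zero] using SmoothBoundsOn.const x (by simpa using hx)
  | succ n =>
    have hnet : (fun p => netP φ d (n + 1) p x)
        = fun p => layer d (n + 1) n p (netHidden φ d (n + 1) x n p) :=
      funext fun p => net_succ_eq φ d (n + 1) x p n
    rw [hnet]
    refine ((netHidden_smoothBoundsOn hφ hφlip hφ' hφ0 hB hC hx n).bilinear_id_left_delta
      (layer d (n + 1) n) (norm_layer_le d (n + 1) n) fun p hp => hp n).mono
      le_rfl le_rfl le_rfl ?_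
    linarith [delta_step_le hB hC n, mul_self_nonneg (delta B (n + 1) * C)]

end Network

/-- For a `k`-layer network with `1`-Lipschitz, `1`-smooth activation `φ`,
`φ 0 = 0`, weight spectral norms at most `B i` with `B i ≥ 1`, and `‖x‖ ≤ C`
with `C ≥ 1`, the parameter-gradient map `W ↦ ∇_W f_W(x)` is Lipschitz with
constant at most `3 k Δ_{k,1}² C²`, where `Δ_{k,1} = ∑_{i=1}^k ∏_{j ≠ i} B_j`. -/
theorem net_param_grad_lipschitz (φ : ℝ → ℝ) (hφdiff : Differentiable ℝ φ)
    (hφ : LipschitzWith 1 φ) (hφsmooth : LipschitzWith 1 (deriv φ)) (hφ0 : φ 0 = 0)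
    (d : ℕ → ℕ) (k : ℕ) (B : ℕ → ℝ) (hB : ∀ i, 1 ≤ B i) (C : ℝ) (hC : 1 ≤ C)
    (x : EuclideanSpace ℝ (Fin (d 0))) (hx : ‖x‖ ≤ C)
    (p q : Params d k)
    (hp : ∀ i : Fin k, sNorm (pW d k p i.1) ≤ B i.1)
    (hq : ∀ i : Fin k, sNorm (pW d k q i.1) ≤ B i.1) :
    ‖fderiv ℝ (fun r : Params d k => netP φ d k r x) p
        - fderiv ℝ (fun r : Params d k => netP φ d k r x) q‖
      ≤ (3 * k * (∑ i ∈ range k, ∏ j ∈ (range k).erase i, B j) ^ 2 * C ^ 2) * ‖p - q‖ := by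
  have hB0 : ∀ i, 0 ≤ B i := fun i => zero_le_one.trans (hB i)
  exact (netP_smoothBoundsOn hφdiff hφ hφsmooth hφ0 hB hC hx).norm_fderiv_sub_le
    p (norm_layer_apply_le_of_sNorm_le hB0 hp) q (norm_layer_apply_le_of_sNorm_le hB0 hq)
end

section
/- Non-expansiveness of gradient descent on convex smooth functions: if f : ℝ^p → ℝ is convex and β-smooth, then for any step size α ≤ 2/β, the gradient update G(w) = w - α∇f(w) satisfies ‖G(w) - G(w')‖ ≤ ‖w - w'‖ for all w, w'. -/
/-!
Co-coercivity drives the proof. Chaining the first-order convexity bound at `a` with the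
descent lemma at `b`, both evaluated at the point `b - β⁻¹ (∇f b - ∇f a)`, gives
`f a + ⟪∇f a, b - a⟫ + ‖∇f b - ∇f a‖² / (2β) ≤ f b`; adding this to its copy with `a`, `b`
swapped yields `‖d‖² / β ≤ ⟪d, w - w'⟫` for `d = ∇f w - ∇f w'`. Expanding
`‖(w - w') - α d‖² = ‖w - w'‖² - α (2⟪d, w - w'⟫ - α ‖d‖²)` shows the bracket is nonnegative
once `α ≤ 2/β`.
-/

open Set
open scoped RealInnerProductSpace Gradient

variable {F : Type*} [NormedAddCommGroup F] [InnerProductSpace ℝ F]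

theorem norm_sub_smul_le_norm {u d : F} {α : ℝ} (hα : 0 ≤ α)
    (h : α * ‖d‖ ^ 2 ≤ 2 * ⟪d, u⟫) : ‖u - α • d‖ ≤ ‖u‖ := by
  have hsq : ‖u - α • d‖ ^ 2 = ‖u‖ ^ 2 - α * (2 * ⟪d, u⟫ - α * ‖d‖ ^ 2) := by
    rw [norm_sub_sq_real, real_inner_smul_right, norm_smul, Real.norm_of_nonneg hα,
      real_inner_comm]
    ring
  refine (sq_le_sq₀ (norm_nonneg _) (norm_nonneg _)).1 ?_
  rw [hsq]
  exact sub_le_self _ (mul_nonneg hα (by linarith))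

variable [CompleteSpace F] {f : F → ℝ} {g x v : F} {t : ℝ}

theorem HasGradientAt.hasDerivAt_comp_add_smul (h : HasGradientAt f g (x + t • v)) :
    HasDerivAt (fun s : ℝ => f (x + s • v)) ⟪g, v⟫ t := by
  have hline : HasDerivAt (fun s : ℝ => x + s • v) v t := by
    simpa using ((hasDerivAt_id t).smul_const v).const_add x
  simpa [Function.comp_def] using h.hasFDerivAt.comp_hasDerivAt t hline

theorem ConvexOn.add_inner_gradient_le (hf : ConvexOn ℝ univ f) (hx : DifferentiableAt ℝ f x)
    (y : F) : f x + ⟪∇ f x, y - x⟫ ≤ f y := by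
  have hline : ConvexOn ℝ univ (fun s : ℝ => f (x + s • (y - x))) := by
    simpa [Function.comp_def, AffineMap.lineMap_apply, add_comm]
      using hf.comp_affineMap (AffineMap.lineMap x y)
  have hderiv : HasDerivAt (fun s : ℝ => f (x + s • (y - x))) ⟪∇ f x, y - x⟫ 0 :=
    HasGradientAt.hasDerivAt_comp_add_smul (by simpa using hx.hasGradientAt)
  have := hline.le_slope_of_hasDerivAt (mem_univ 0) (mem_univ 1) one_pos hderiv
  simp only [slope, sub_zero, inv_one, one_smul, zero_smul, add_zero, add_sub_cancel,
    vsub_eq_sub] at this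
  linarith

theorem le_add_inner_gradient_add_sq_of_lipschitzWith (hf : Differentiable ℝ f) {β : NNReal}
    (hβ : LipschitzWith β (∇ f)) (x y : F) :
    f y ≤ f x + ⟪∇ f x, y - x⟫ + β / 2 * ‖y - x‖ ^ 2 := by
  set v := y - x
  let φ : ℝ → ℝ := fun t => f (x + t • v) - t * ⟪∇ f x, v⟫ - β / 2 * t ^ 2 * ‖v‖ ^ 2
  have hφ : ∀ t, HasDerivAt φ (⟪∇ f (x + t • v) - ∇ f x, v⟫ - β * t * ‖v‖ ^ 2) t := by
    intro t
    have := ((((hf (x + t • v)).hasGradientAt.hasDerivAt_comp_add_smul).sub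
      ((hasDerivAt_id t).mul_const ⟪∇ f x, v⟫)).sub
      (((hasDerivAt_pow 2 t).const_mul ((β : ℝ) / 2)).mul_const (‖v‖ ^ 2)))
    refine this.congr_deriv ?_
    rw [inner_sub_left]
    push_cast
    ring
  have hslope : ∀ t, 0 ≤ t → ⟪∇ f (x + t • v) - ∇ f x, v⟫ ≤ β * t * ‖v‖ ^ 2 := by
    intro t ht
    have hlip : ‖∇ f (x + t • v) - ∇ f x‖ ≤ β * (t * ‖v‖) := by
      simpa [dist_eq_norm, norm_smul, abs_of_nonneg ht] using hβ.dist_le_mul (x + t • v) x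
    calc ⟪∇ f (x + t • v) - ∇ f x, v⟫ ≤ ‖∇ f (x + t • v) - ∇ f x‖ * ‖v‖ := real_inner_le_norm _ _
      _ ≤ β * (t * ‖v‖) * ‖v‖ := by gcongr
      _ = β * t * ‖v‖ ^ 2 := by ring
  have hanti : AntitoneOn φ (Icc 0 1) :=
    antitoneOn_of_hasDerivWithinAt_nonpos (convex_Icc 0 1)
      (fun t _ => (hφ t).continuousAt.continuousWithinAt)
      (fun t _ => (hφ t).hasDerivWithinAt)
      (fun t ht => sub_nonpos.2 (hslope t (interior_subset ht).1))
  have := hanti (left_mem_Icc.2 zero_le_one) (right_mem_Icc.2 zero_le_one) zero_le_one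
  simp only [φ, one_smul, v, add_sub_cancel, zero_smul, add_zero] at this
  linarith

-- For `β = 0` the junk value `β⁻¹ = 0` makes this the first-order convexity bound.
theorem ConvexOn.add_inner_gradient_add_sq_norm_le (hconv : ConvexOn ℝ univ f)
    (hf : Differentiable ℝ f) {β : NNReal} (hβ : LipschitzWith β (∇ f)) (a b : F) :
    f a + ⟪∇ f a, b - a⟫ + (β : ℝ)⁻¹ / 2 * ‖∇ f b - ∇ f a‖ ^ 2 ≤ f b := by
  set d := ∇ f b - ∇ f a
  set z := b - (β : ℝ)⁻¹ • d
  have hlower := hconv.add_inner_gradient_le (hf a) z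
  have hupper := le_add_inner_gradient_add_sq_of_lipschitzWith hf hβ b z
  have hza : z - a = (b - a) - (β : ℝ)⁻¹ • d := sub_right_comm _ _ _
  have hzb : z - b = -((β : ℝ)⁻¹ • d) := sub_sub_cancel_left _ _
  rw [hza, inner_sub_right, real_inner_smul_right] at hlower
  rw [hzb, inner_neg_right, real_inner_smul_right, norm_neg, norm_smul, Real.norm_eq_abs,
    abs_of_nonneg (by positivity)] at hupper
  have hd : ⟪∇ f b, d⟫ - ⟪∇ f a, d⟫ = ‖d‖ ^ 2 := by
    rw [← inner_sub_left, real_inner_self_eq_norm_sq]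
  have hinv : (β : ℝ) * (β : ℝ)⁻¹ ^ 2 = (β : ℝ)⁻¹ := by
    rcases eq_or_ne (β : ℝ) 0 with h | h
    · simp [h]
    · field_simp
  linear_combination hlower + hupper - (β : ℝ)⁻¹ * hd + ‖d‖ ^ 2 / 2 * hinv

theorem ConvexOn.inv_mul_sq_norm_gradient_sub_le_inner (hconv : ConvexOn ℝ univ f)
    (hf : Differentiable ℝ f) {β : NNReal} (hβ : LipschitzWith β (∇ f)) (x y : F) :
    (β : ℝ)⁻¹ * ‖∇ f x - ∇ f y‖ ^ 2 ≤ ⟪∇ f x - ∇ f y, x - y⟫ := by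
  have hxy := hconv.add_inner_gradient_add_sq_norm_le hf hβ x y
  have hyx := hconv.add_inner_gradient_add_sq_norm_le hf hβ y x
  rw [norm_sub_rev] at hxy
  have hsum : ⟪∇ f x, y - x⟫ + ⟪∇ f y, x - y⟫ = -⟪∇ f x - ∇ f y, x - y⟫ := by
    rw [← neg_sub x y, inner_neg_right, inner_sub_left]
    ring
  linarith

theorem gradient_step_nonexpansive_general (p : ℕ) (f : EuclideanSpace ℝ (Fin p) → ℝ)
    (hdiff : Differentiable ℝ f) (hconv : ConvexOn ℝ Set.univ f)
    (β : NNReal) (hsmooth : LipschitzWith β (gradient f))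
    (α : ℝ) (hα : 0 < α) (hα2 : α ≤ 2 / β) (w w' : EuclideanSpace ℝ (Fin p)) :
    ‖(w - α • gradient f w) - (w' - α • gradient f w')‖ ≤ ‖w - w'‖ := by
  set d := gradient f w - gradient f w'
  have hco := hconv.inv_mul_sq_norm_gradient_sub_le_inner hdiff hsmooth w w'
  have hstep : α * ‖d‖ ^ 2 ≤ 2 * ⟪d, w - w'⟫ :=
    calc α * ‖d‖ ^ 2 ≤ 2 / β * ‖d‖ ^ 2 := by gcongr
      _ = 2 * ((β : ℝ)⁻¹ * ‖d‖ ^ 2) := by ring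
      _ ≤ 2 * ⟪d, w - w'⟫ := by gcongr
  rw [sub_sub_sub_comm, ← smul_sub]
  exact norm_sub_smul_le_norm hα.le hstep

/-- Non-expansiveness of gradient descent on convex smooth functions: if
`f : ℝ^p → ℝ` is convex and `β`-smooth (differentiable with `β`-Lipschitz
gradient), then for any step size `0 < α ≤ 2/β` the gradient update
`G(w) = w - α ∇f(w)` satisfies `‖G(w) - G(w')‖ ≤ ‖w - w'‖` for all `w, w'`. -/
theorem gradient_step_nonexpansive (p : ℕ) (f : EuclideanSpace ℝ (Fin p) → ℝ)
    (hdiff : Differentiable ℝ f) (hconv : ConvexOn ℝ Set.univ f)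
    (β : NNReal) (hβ : 0 < β) (hsmooth : LipschitzWith β (gradient f))
    (α : ℝ) (hα : 0 < α) (hα2 : α ≤ 2 / β) (w w' : EuclideanSpace ℝ (Fin p)) :
    ‖(w - α • gradient f w) - (w' - α • gradient f w')‖ ≤ ‖w - w'‖ :=
  gradient_step_nonexpansive_general p f hdiff hconv β hsmooth α hα hα2 w w'
end
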